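/- arXiv:2307.02619 — 2 statements merged into one kernel-verified Lean document; each statement's English description precedes it below -/
import Mathlib

section
/- Let Ψ := (W_{i,j}(z))_{i,j≥0}, the one-sided matrix over ℂ((z^{−1})) of generating series of unrestricted lattice paths with nonnegative endpoints. Then Ψ is a two-sided inverse of zI − K: for all i,j ≥ 0, Σ_{r≥0} (zI−K)_{i,r}·W_{r,j}(z) = δ_{i,j} and Σ_{r≥0} W_{i,r}(z)·(zI−K)_{r,j} = δ_{i,j} (each sum has only finitely many nonzero terms since zI−K is banded). In particular, for i,j ≥ 0, W_{i,j}(z) coincides with the (i,j) entry ζ_{i,j}(z) of the inverse of zI−K. -/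
/-!
Let `T` be the bi-infinite banded transition matrix of the walk on `ℤ` (`transWeight`). Analysing
the first step of a walk gives `z W = 1 + T W` on all of `ℤ`, and `z V = 1 + T₋₋ V` on the
negative heights. Cutting a walk from a negative height to a nonnegative one at its last negative
height gives `W₋₊ = V T₋₊ W₊₊`, so that `z W₊₊ = 1 + T₊₊ W₊₊ + T₊₋ V T₋₊ W₊₊ = 1 + K W₊₊`, i.e.
`z - K` is the Schur complement of the block `z - T₋₋` in `z - T`. We compute with power series
in `X = z⁻¹`, where the first-passage identity follows because the only family with
`D = X · T₋₋ D` is `D = 0`.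

The right-inverse identity is the left-inverse identity of the time-reversed walk: reading paths
backwards turns `a` into `a_n^{(-k)}`, swaps `p` and `q`, and transposes `W`, `V` and `K`.
-/

open scoped BigOperators
open Finset

noncomputable section

/-- The field `ℂ((z⁻¹))`, realized as Laurent series in the variable `t = z⁻¹`. -/
abbrev LS : Type := LaurentSeries ℂ

/-- The element `z` of `ℂ((z⁻¹))` (i.e. `t⁻¹`). -/
def zLS : LS := HahnSeries.single (-1 : ℤ) (1 : ℂ)

/-- Constant (scalar) Laurent series. -/
def CLS (c : ℂ) : LS := HahnSeries.C c

/-- The generating series `Σ_{n ≥ 0} c n · z^{-n-1}` in `ℂ((z⁻¹))`. -/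
def gen (c : ℕ → ℂ) : LS :=
  HahnSeries.single (1 : ℤ) (1 : ℂ) * (HahnSeries.ofPowerSeries ℤ ℂ) (PowerSeries.mk c)

/-- Weight of a step of displacement `s` starting at height `h`:
`a_h^{(s)}` if `s ≥ 0`, and `a_{h+s}^{(s)}` if `s < 0`.  (Here `a k n = aₙ⁽ᵏ⁾`.) -/
def stepW (a : ℤ → ℤ → ℂ) (h s : ℤ) : ℂ := if 0 ≤ s then a s h else a s (h + s)

/-- Extend a finite step sequence by zero. -/
def ext {n : ℕ} (s : Fin n → ℤ) : ℕ → ℤ := fun t => if h : t < n then s ⟨t, h⟩ else 0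

/-- Height after `k` steps, starting at height `i`. -/
def hgt (i : ℤ) (σ : ℕ → ℤ) (k : ℕ) : ℤ := i + ∑ t ∈ Finset.range k, σ t

/-- Weight of the lattice path of length `n` starting at height `i` with steps `σ`. -/
def wgt (a : ℤ → ℤ → ℂ) (n : ℕ) (i : ℤ) (σ : ℕ → ℤ) : ℂ :=
  ∏ k ∈ Finset.range n, stepW a (hgt i σ k) (σ k)

/-- All admissible step sequences of length `n` (each step in `[-p, q]`). -/
def steps (p q n : ℕ) : Finset (Fin n → ℤ) :=
  Fintype.piFinset fun _ => Finset.Icc (-(p : ℤ)) (q : ℤ)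

/-- `A_{[n,i,j]}`: weight polynomial of paths of length `n` from `(0,i)` to `(n,j)`
staying at height `≥ 0`. -/
def Apoly (p q : ℕ) (a : ℤ → ℤ → ℂ) (n : ℕ) (i j : ℤ) : ℂ :=
  ∑ s ∈ steps p q n,
    if hgt i (ext s) n = j ∧ ∀ k ≤ n, 0 ≤ hgt i (ext s) k then wgt a n i (ext s) else 0

/-- `W_{[n,i,j]}`: weight polynomial of unrestricted paths of length `n` from `(0,i)` to `(n,j)`. -/
def Wpoly (p q : ℕ) (a : ℤ → ℤ → ℂ) (n : ℕ) (i j : ℤ) : ℂ :=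
  ∑ s ∈ steps p q n, if hgt i (ext s) n = j then wgt a n i (ext s) else 0

/-- `V_{[n,i,j]}`: weight polynomial of paths of length `n` from `(0,i)` to `(n,j)`
staying at height `≤ -1`. -/
def Vpoly (p q : ℕ) (a : ℤ → ℤ → ℂ) (n : ℕ) (i j : ℤ) : ℂ :=
  ∑ s ∈ steps p q n,
    if hgt i (ext s) n = j ∧ ∀ k ≤ n, hgt i (ext s) k ≤ -1 then wgt a n i (ext s) else 0

/-- `A_{[ℓ,i,j,N]}`: weight polynomial of paths of length `ℓ` from `(0,i)` to `(ℓ,j)`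
with all heights in `{0, …, N-1}`. -/
def Aboxpoly (p q : ℕ) (a : ℤ → ℤ → ℂ) (N ℓ : ℕ) (i j : ℤ) : ℂ :=
  ∑ s ∈ steps p q ℓ,
    if hgt i (ext s) ℓ = j ∧ ∀ k ≤ ℓ, 0 ≤ hgt i (ext s) k ∧ hgt i (ext s) k ≤ (N : ℤ) - 1
    then wgt a ℓ i (ext s) else 0

/-- The generating series `A_{i,j}(z)`. -/
def Aser (p q : ℕ) (a : ℤ → ℤ → ℂ) (i j : ℤ) : LS := gen fun n => Apoly p q a n i j

/-- The generating series `W_{i,j}(z)`. -/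
def Wser (p q : ℕ) (a : ℤ → ℤ → ℂ) (i j : ℤ) : LS := gen fun n => Wpoly p q a n i j

/-- The generating series `V_{i,j}(z)`. -/
def Vser (p q : ℕ) (a : ℤ → ℤ → ℂ) (i j : ℤ) : LS := gen fun n => Vpoly p q a n i j


/-- The one-sided banded matrix `H`: `h_{i,j} = a_{min(i,j)}^{(j-i)}` when `-p ≤ j-i ≤ q`. -/
def Hmat (p q : ℕ) (a : ℤ → ℤ → ℂ) (i j : ℕ) : ℂ :=
  if -(p : ℤ) ≤ (j : ℤ) - (i : ℤ) ∧ (j : ℤ) - (i : ℤ) ≤ (q : ℤ) then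
    a ((j : ℤ) - (i : ℤ)) (min (i : ℤ) (j : ℤ)) else 0

/-- Entrywise power of a one-sided matrix whose rows are supported on `[0, i + B]`:
`(M^n)_{i,j}`. -/
def onePow (M : ℕ → ℕ → ℂ) (B : ℕ) : ℕ → ℕ → ℕ → ℂ
  | 0, i, j => if i = j then 1 else 0
  | n + 1, i, j => ∑ r ∈ Finset.range (i + B + 1), M i r * onePow M B n r j

/-- The banded matrix `K` over `ℂ((z⁻¹))`: it agrees with `H` except in the top-left `p × q`
corner, where `K_{i,j} = h_{i,j} + Σ_{l=1}^{p-i} Σ_{m=1}^{q-j} a_{-l}^{(-(l+i))} a_{-m}^{(m+j)}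
V_{-l,-m}(z)`. -/
def Kmat (p q : ℕ) (a : ℤ → ℤ → ℂ) (i j : ℕ) : LS :=
  CLS (Hmat p q a i j) +
    ∑ l ∈ Finset.Icc 1 (p - i), ∑ m ∈ Finset.Icc 1 (q - j),
      CLS (a (-((l : ℤ) + (i : ℤ))) (-(l : ℤ))) * CLS (a ((m : ℤ) + (j : ℤ)) (-(m : ℤ))) *
        Vser p q a (-(l : ℤ)) (-(m : ℤ))

section Paths

variable (P : ℤ → Prop) [DecidablePred P] (p q : ℕ) (a : ℤ → ℤ → ℂ)

def pathPoly (n : ℕ) (i j : ℤ) : ℂ :=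
  ∑ s ∈ steps p q n,
    if hgt i (_root_.ext s) n = j ∧ ∀ k ≤ n, P (hgt i (_root_.ext s) k)
    then wgt a n i (_root_.ext s) else 0

lemma Wpoly_eq_pathPoly (n : ℕ) (i j : ℤ) :
    Wpoly p q a n i j = pathPoly (fun _ => True) p q a n i j := by
  simp [Wpoly, pathPoly]

lemma Vpoly_eq_pathPoly (n : ℕ) (i j : ℤ) :
    Vpoly p q a n i j = pathPoly (· ≤ -1) p q a n i j := rfl

lemma hgt_zero (i : ℤ) (σ : ℕ → ℤ) : hgt i σ 0 = i := by simp [hgt]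

lemma hgt_succ (i : ℤ) (σ : ℕ → ℤ) (k : ℕ) : hgt i σ (k + 1) = hgt i σ k + σ k := by
  simp [hgt, Finset.sum_range_succ, add_assoc]

lemma ext_cons_zero {n : ℕ} (k : ℤ) (t : Fin n → ℤ) : _root_.ext (Fin.cons k t) 0 = k := by
  simp [_root_.ext]

lemma ext_cons_succ {n : ℕ} (k : ℤ) (t : Fin n → ℤ) (u : ℕ) :
    _root_.ext (Fin.cons k t) (u + 1) = _root_.ext t u := by
  unfold _root_.ext
  by_cases h : u < n
  · rw [dif_pos (by omega), dif_pos h]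
    exact Fin.cons_succ (α := fun _ => ℤ) k t ⟨u, h⟩
  · rw [dif_neg (by omega), dif_neg h]

lemma hgt_cons {n : ℕ} (i k : ℤ) (t : Fin n → ℤ) (u : ℕ) :
    hgt i (_root_.ext (Fin.cons k t)) (u + 1) = hgt (i + k) (_root_.ext t) u := by
  simp only [hgt, Finset.sum_range_succ', ext_cons_succ, ext_cons_zero]
  ring

lemma wgt_cons {n : ℕ} (i k : ℤ) (t : Fin n → ℤ) :
    wgt a (n + 1) i (_root_.ext (Fin.cons k t)) =
      stepW a i k * wgt a n (i + k) (_root_.ext t) := by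
  simp only [wgt, Finset.prod_range_succ', hgt_zero, ext_cons_zero, hgt_cons, ext_cons_succ,
    mul_comm]

lemma sum_steps_succ {M : Type*} [AddCommMonoid M] (n : ℕ) (f : (Fin (n + 1) → ℤ) → M) :
    ∑ s ∈ steps p q (n + 1), f s =
      ∑ k ∈ Finset.Icc (-(p : ℤ)) q, ∑ t ∈ steps p q n, f (Fin.cons k t) := by
  have := Finset.filter_piFinset_eq_map_consEquiv
    (fun _ : Fin (n + 1) => Finset.Icc (-(p : ℤ)) q) (fun _ => True)
  simp only [Finset.filter_true] at this
  rw [steps, this, Finset.sum_map, Finset.sum_product]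
  rfl

lemma pathPoly_zero (i j : ℤ) : pathPoly P p q a 0 i j = if i = j ∧ P i then 1 else 0 := by
  simp [pathPoly, steps, wgt, hgt_zero]

lemma pathPoly_of_not (n : ℕ) {i : ℤ} (hi : ¬ P i) (j : ℤ) : pathPoly P p q a n i j = 0 :=
  Finset.sum_eq_zero fun s _ => if_neg fun h => hi (by simpa [hgt_zero] using h.2 0 n.zero_le)

lemma pathPoly_succ (n : ℕ) {i : ℤ} (hi : P i) (j : ℤ) :
    pathPoly P p q a (n + 1) i j =
      ∑ k ∈ Finset.Icc (-(p : ℤ)) q, stepW a i k * pathPoly P p q a n (i + k) j := by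
  simp only [pathPoly, sum_steps_succ, Finset.mul_sum, mul_ite, mul_zero, wgt_cons]
  refine Finset.sum_congr rfl fun k _ => Finset.sum_congr rfl fun t _ => if_congr ?_ rfl rfl
  rw [hgt_cons]
  refine and_congr_right fun _ => ⟨fun h u hu => by simpa [hgt_cons] using h (u + 1) (by omega),
    fun h u hu => ?_⟩
  rcases u with _ | u
  · simpa [hgt_zero] using hi
  · simpa [hgt_cons] using h u (by omega)

end Paths

section Reversal

variable (P : ℤ → Prop) [DecidablePred P] (p q : ℕ) (a : ℤ → ℤ → ℂ)

/-- Read backwards, a step of displacement `k` becomes one of displacement `-k` between the same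
two heights, so it keeps its weight if the weights are re-indexed by `k ↦ -k`. -/
def revWeights : ℤ → ℤ → ℂ := fun k h => a (-k) h

def revSteps {n : ℕ} (s : Fin n → ℤ) : Fin n → ℤ := fun t => -s t.rev

lemma revSteps_revSteps {n : ℕ} (s : Fin n → ℤ) : revSteps (revSteps s) = s := by
  funext t; simp [revSteps]

lemma revSteps_mem_steps {n : ℕ} {s : Fin n → ℤ} (hs : s ∈ steps p q n) :
    revSteps s ∈ steps q p n := by
  simp only [steps, Fintype.mem_piFinset, Finset.mem_Icc, revSteps] at hs ⊢
  exact fun t => ⟨by linarith [(hs t.rev).2], by linarith [(hs t.rev).1]⟩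

lemma ext_revSteps {n : ℕ} (s : Fin n → ℤ) {t : ℕ} (ht : t < n) :
    _root_.ext (revSteps s) t = -_root_.ext s (n - 1 - t) := by
  simp only [_root_.ext, dif_pos ht, dif_pos (by omega : n - 1 - t < n), revSteps, Fin.rev]
  congr 3
  omega

lemma stepW_revWeights (h d : ℤ) : stepW (revWeights a) (h + d) (-d) = stepW a h d := by
  unfold stepW revWeights
  split_ifs with h1 h2 h2 <;> simp only [neg_neg, add_neg_cancel_right]
  · obtain rfl : d = 0 := by omega
    simp
  all_goals omega

lemma hgt_revSteps {n : ℕ} (i : ℤ) (s : Fin n → ℤ) {k : ℕ} (hk : k ≤ n) :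
    hgt (hgt i (_root_.ext s) n) (_root_.ext (revSteps s)) k = hgt i (_root_.ext s) (n - k) := by
  induction k with
  | zero => simp [hgt_zero]
  | succ k ih =>
    have hnk : n - k = n - (k + 1) + 1 := by omega
    rw [hgt_succ, ih (by omega), ext_revSteps s (by omega), hnk, hgt_succ,
      show n - 1 - k = n - (k + 1) by omega]
    ring

lemma wgt_revSteps {n : ℕ} (i : ℤ) (s : Fin n → ℤ) :
    wgt (revWeights a) n (hgt i (_root_.ext s) n) (_root_.ext (revSteps s)) =
      wgt a n i (_root_.ext s) := by
  rw [wgt, ← Finset.prod_range_reflect, wgt]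
  refine Finset.prod_congr rfl fun k hk => ?_
  rw [Finset.mem_range] at hk
  rw [hgt_revSteps i s (by omega), ext_revSteps s (by omega),
    show n - (n - 1 - k) = k + 1 by omega, show n - 1 - (n - 1 - k) = k by omega, hgt_succ,
    stepW_revWeights]

lemma pathPoly_revWeights (n : ℕ) (i j : ℤ) :
    pathPoly P q p (revWeights a) n j i = pathPoly P p q a n i j := by
  refine (Finset.sum_nbij' revSteps revSteps (fun s hs => revSteps_mem_steps p q hs)
    (fun s hs => revSteps_mem_steps q p hs) (fun s _ => revSteps_revSteps s)
    (fun s _ => revSteps_revSteps s) fun s _ => ?_).symm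
  have hend : hgt j (_root_.ext (revSteps s)) n = j - hgt i (_root_.ext s) n + i := by
    have := hgt_revSteps i s (le_refl n)
    simp only [hgt, Nat.sub_self, Finset.range_zero, Finset.sum_empty] at this ⊢
    linarith
  by_cases hij : hgt i (_root_.ext s) n = j
  · subst hij
    have hP : (∀ k ≤ n, P (hgt (hgt i (_root_.ext s) n) (_root_.ext (revSteps s)) k)) ↔
        ∀ k ≤ n, P (hgt i (_root_.ext s) k) := by
      refine ⟨fun h k hk => ?_, fun h k hk => ?_⟩
      · simpa [hgt_revSteps i s (Nat.sub_le n k), Nat.sub_sub_self hk] using h (n - k) (by omega)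
      · simpa [hgt_revSteps i s hk] using h (n - k) (by omega)
    simp only [hend, sub_self, zero_add, true_and, hP, wgt_revSteps]
  · rw [if_neg fun h => hij h.1, if_neg fun h => hij (by linarith [h.1])]

end Reversal

def transWeight (p q : ℕ) (a : ℤ → ℤ → ℂ) (h h' : ℤ) : ℂ :=
  if h' - h ∈ Finset.Icc (-(p : ℤ)) q then stepW a h (h' - h) else 0

section TransWeight

variable {p q : ℕ} {a : ℤ → ℤ → ℂ}

lemma transWeight_eq_zero {h h' : ℤ} (hh' : h' ∉ Finset.Icc (h - p) (h + q)) :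
    transWeight p q a h h' = 0 :=
  if_neg fun hmem => hh' (by simp only [Finset.mem_Icc] at hmem ⊢; omega)

lemma transWeight_of_le {h h' : ℤ} (hle : h ≤ h') (hq : h' - h ≤ q) :
    transWeight p q a h h' = a (h' - h) h := by
  rw [transWeight, if_pos (Finset.mem_Icc.mpr ⟨by omega, hq⟩), stepW, if_pos (by omega)]

lemma transWeight_of_lt {h h' : ℤ} (hlt : h' < h) (hp : h - h' ≤ p) :
    transWeight p q a h h' = a (h' - h) h' := by
  rw [transWeight, if_pos (Finset.mem_Icc.mpr ⟨by omega, by omega⟩), stepW, if_neg (by omega),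
    add_sub_cancel]

lemma Hmat_eq_transWeight (i j : ℕ) : Hmat p q a i j = transWeight p q a i j := by
  unfold Hmat transWeight stepW
  simp only [Finset.mem_Icc]
  split_ifs <;> first | rfl | (congr 1; omega)

lemma transWeight_revWeights (h h' : ℤ) :
    transWeight q p (revWeights a) h' h = transWeight p q a h h' := by
  have hstep := stepW_revWeights a h (h' - h)
  rw [add_sub_cancel, neg_sub] at hstep
  simp only [transWeight, Finset.mem_Icc, hstep]
  exact if_congr (by omega) rfl rfl

lemma sum_stepW_eq_sum_transWeight {M : Type*} [AddCommMonoid M] (i : ℤ) (f : ℤ → ℂ → M) :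
    ∑ k ∈ Finset.Icc (-(p : ℤ)) q, f (i + k) (stepW a i k) =
      ∑ h ∈ Finset.Icc (i - p) (i + q), f h (transWeight p q a i h) := by
  refine Finset.sum_nbij' (i + ·) (· - i) ?_ ?_ ?_ ?_ ?_ <;>
    simp +contextual [Finset.mem_Icc, transWeight]
  all_goals omega

end TransWeight

open PowerSeries

def pathSeries (P : ℤ → Prop) [DecidablePred P] (p q : ℕ) (a : ℤ → ℤ → ℂ) (i j : ℤ) :
    PowerSeries ℂ :=
  PowerSeries.mk fun n => pathPoly P p q a n i j

section PathSeries

variable (P : ℤ → Prop) [DecidablePred P] (p q : ℕ) (a : ℤ → ℤ → ℂ)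

lemma pathSeries_of_not {i : ℤ} (hi : ¬ P i) (j : ℤ) : pathSeries P p q a i j = 0 := by
  ext n; simp [pathSeries, pathPoly_of_not P p q a n hi]

lemma pathSeries_first_step {i : ℤ} (hi : P i) (j : ℤ) :
    pathSeries P p q a i j = (if i = j then 1 else 0) +
      X * ∑ h ∈ Finset.Icc (i - p) (i + q), C (transWeight p q a i h) * pathSeries P p q a h j := by
  ext n
  rcases n with _ | n
  · simp [pathSeries, pathPoly_zero, hi, apply_ite]
  · simp [pathSeries, pathPoly_succ P p q a n hi, coeff_one, apply_ite,
      ← sum_stepW_eq_sum_transWeight (f := fun h c => c * pathPoly P p q a n h j)]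

end PathSeries

abbrev Wps (p q : ℕ) (a : ℤ → ℤ → ℂ) : ℤ → ℤ → PowerSeries ℂ := pathSeries (fun _ => True) p q a

abbrev Vps (p q : ℕ) (a : ℤ → ℤ → ℂ) : ℤ → ℤ → PowerSeries ℂ := pathSeries (· ≤ -1) p q a

section WpsVps

variable {p q : ℕ} {a : ℤ → ℤ → ℂ}

lemma Wps_first_step (i j : ℤ) :
    Wps p q a i j = (if i = j then 1 else 0) +
      X * ∑ h ∈ Finset.Icc (i - p) (i + q), C (transWeight p q a i h) * Wps p q a h j :=
  pathSeries_first_step _ p q a trivial j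

lemma Vps_first_step {i : ℤ} (hi : i ≤ -1) (j : ℤ) :
    Vps p q a i j = (if i = j then 1 else 0) +
      X * ∑ h ∈ Finset.Icc (i - p) (i + q), C (transWeight p q a i h) * Vps p q a h j :=
  pathSeries_first_step (· ≤ -1) p q a hi j

lemma Vps_of_nonneg {i : ℤ} (hi : ¬ i ≤ -1) (j : ℤ) : Vps p q a i j = 0 :=
  pathSeries_of_not (· ≤ -1) p q a hi j

end WpsVps

lemma eq_zero_of_eq_X_mul_sum {ι R : Type*} [Semiring R] {Q : ι → Prop} {D : ι → R⟦X⟧}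
    (F : ι → Finset ι) (c : ι → ι → R) (hF : ∀ i, Q i → ∀ h ∈ F i, Q h)
    (hD : ∀ i, Q i → D i = X * ∑ h ∈ F i, C (c i h) * D h) {i : ι} (hi : Q i) : D i = 0 := by
  ext n
  induction n generalizing i with
  | zero => rw [hD i hi, coeff_zero_X_mul, map_zero]
  | succ n ih =>
    rw [hD i hi, coeff_succ_X_mul, map_sum, map_zero]
    exact Finset.sum_eq_zero fun h hh => by
      rw [coeff_C_mul, ih (hF i hi h hh), map_zero, mul_zero]

lemma sum_Icc_eq_sum_range_add_sum_filter {M : Type*} [AddCommMonoid M] {lo hi : ℤ} {N : ℕ}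
    (hN : hi < N) (f : ℤ → M) (hf : ∀ h ∉ Finset.Icc lo hi, f h = 0) :
    ∑ h ∈ Finset.Icc lo hi, f h =
      ∑ r ∈ Finset.range N, f r + ∑ h ∈ (Finset.Icc lo hi).filter (· ≤ -1), f h := by
  rw [← Finset.sum_filter_not_add_sum_filter _ (· ≤ -1)]
  congr 1
  rw [show ∑ r ∈ Finset.range N, f r = ∑ h ∈ (Finset.range N).map Nat.castEmbedding, f h by simp]
  refine Finset.sum_subset (fun h hh => ?_) fun h hh hh' => hf h fun hmem => hh' ?_
  · simp only [Finset.mem_filter, Finset.mem_Icc, Finset.mem_map, Finset.mem_range] at hh ⊢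
    exact ⟨h.toNat, by omega, by simp; omega⟩
  · simp only [Finset.mem_filter, Finset.mem_map, Finset.mem_range] at hh ⊢
    obtain ⟨r, -, rfl⟩ := hh
    exact ⟨hmem, by simp only [Nat.castEmbedding_apply]; omega⟩

lemma sum_filter_neg_eq_sum_Icc {M : Type*} [AddCommMonoid M] (p q i : ℕ) (f : ℤ → M) :
    ∑ h ∈ (Finset.Icc ((i : ℤ) - p) (i + q)).filter (· ≤ -1), f h =
      ∑ l ∈ Finset.Icc 1 (p - i), f (-(l : ℤ)) := by
  refine Finset.sum_nbij' (fun h => (-h).toNat) (fun l => -(l : ℤ)) ?_ ?_ ?_ ?_ ?_ <;>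
    simp +contextual only [Finset.mem_filter, Finset.mem_Icc]
  all_goals intros; first | omega | (congr 1; omega)

section FirstPassage

variable {p q : ℕ} {a : ℤ → ℤ → ℂ}

lemma sum_transWeight_split (i : ℤ) {N : ℕ} (hN : i + q < N) (F : ℤ → PowerSeries ℂ) :
    ∑ h ∈ Finset.Icc (i - p) (i + q), C (transWeight p q a i h) * F h =
      ∑ r ∈ Finset.range N, C (transWeight p q a i r) * F r +
        ∑ h ∈ (Finset.Icc (i - p) (i + q)).filter (· ≤ -1), C (transWeight p q a i h) * F h :=
  sum_Icc_eq_sum_range_add_sum_filter hN _ fun h hh => by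
    rw [transWeight_eq_zero hh, map_zero, zero_mul]

lemma sum_ite_neg_mul_transWeight {i : ℤ} (hi : i ≤ -1) (N : ℕ) (F : ℕ → PowerSeries ℂ) :
    ∑ m ∈ Finset.Icc 1 q, ∑ r ∈ Finset.range N,
        (if i = -(m : ℤ) then 1 else 0) * C (transWeight p q a (-(m : ℤ)) r) * F r =
      ∑ r ∈ Finset.range N, C (transWeight p q a i r) * F r := by
  have hi' : i = -(((-i).toNat : ℕ) : ℤ) := by omega
  rw [Finset.sum_eq_single (-i).toNat]
  · rw [← hi']; simp
  · intro m _ hm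
    exact Finset.sum_eq_zero fun r _ => by rw [if_neg (by omega), zero_mul, zero_mul]
  · intro hq
    simp only [Finset.mem_Icc] at hq
    refine Finset.sum_eq_zero fun r _ => ?_
    rw [← hi', transWeight_eq_zero (by simp only [Finset.mem_Icc]; omega), map_zero,
      mul_zero, zero_mul]

lemma sum_Vps_mul_transWeight_first_step {i : ℤ} (hi : i ≤ -1) (N : ℕ) (F : ℕ → PowerSeries ℂ) :
    ∑ m ∈ Finset.Icc 1 q, ∑ r ∈ Finset.range N,
        Vps p q a i (-(m : ℤ)) * C (transWeight p q a (-(m : ℤ)) r) * F r =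
      ∑ r ∈ Finset.range N, C (transWeight p q a i r) * F r +
        X * ∑ h ∈ (Finset.Icc (i - p) (i + q)).filter (· ≤ -1), C (transWeight p q a i h) *
          ∑ m ∈ Finset.Icc 1 q, ∑ r ∈ Finset.range N,
            Vps p q a h (-(m : ℤ)) * C (transWeight p q a (-(m : ℤ)) r) * F r := by
  rw [Finset.sum_filter_of_ne fun h _ hne => by_contra fun hh => hne (by simp [Vps_of_nonneg hh]),
    ← sum_ite_neg_mul_transWeight hi N F]
  simp only [Vps_first_step hi, add_mul, Finset.sum_add_distrib, Finset.mul_sum,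
    Finset.sum_mul]
  congr 1
  rw [Finset.sum_comm (s := Finset.Icc (i - p) (i + q))]
  refine Finset.sum_congr rfl fun m _ => ?_
  rw [Finset.sum_comm (s := Finset.Icc (i - p) (i + q))]
  exact Finset.sum_congr rfl fun r _ => Finset.sum_congr rfl fun h _ => by ring

/-- First-passage decomposition: a walk from a negative height to a nonnegative one splits at
its last negative height `-m`, from which it jumps up to some height `r < q`. -/
lemma Wps_eq_of_neg_of_nonneg {i j : ℤ} (hi : i ≤ -1) (hj : 0 ≤ j) {N : ℕ} (hN : q ≤ N) :
    Wps p q a i j = X * ∑ m ∈ Finset.Icc 1 q, ∑ r ∈ Finset.range N,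
      Vps p q a i (-(m : ℤ)) * C (transWeight p q a (-(m : ℤ)) r) * Wps p q a r j := by
  refine sub_eq_zero.mp (eq_zero_of_eq_X_mul_sum (Q := (· ≤ -1))
    (D := fun i => Wps p q a i j - X * ∑ m ∈ Finset.Icc 1 q, ∑ r ∈ Finset.range N,
      Vps p q a i (-(m : ℤ)) * C (transWeight p q a (-(m : ℤ)) r) * Wps p q a r j)
    (fun i => (Finset.Icc (i - p) (i + q)).filter (· ≤ -1)) (transWeight p q a)
    (fun i _ h hh => (Finset.mem_filter.mp hh).2) (fun i hi => ?_) hi)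
  rw [Wps_first_step, if_neg (by omega), zero_add,
    sum_transWeight_split i (N := N) (by omega), sum_Vps_mul_transWeight_first_step hi]
  simp only [mul_sub, Finset.sum_sub_distrib, mul_left_comm _ X, ← Finset.mul_sum]
  ring

end FirstPassage

section LeftInverse

variable {p q : ℕ} {a : ℤ → ℤ → ℂ}

variable (p q a) in
/-- `Kmat` in the variable `X = z⁻¹`, where `V(z) = X · Vps`; letting `m` run over all of `[1, q]`
only adds terms with `transWeight (-m) j = 0`. -/
def Kps (i j : ℕ) : PowerSeries ℂ :=
  C (transWeight p q a i j) + ∑ l ∈ Finset.Icc 1 (p - i), ∑ m ∈ Finset.Icc 1 q,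
    C (transWeight p q a i (-(l : ℤ))) * C (transWeight p q a (-(m : ℤ)) j) *
      (X * Vps p q a (-(l : ℤ)) (-(m : ℤ)))

lemma sum_Kps_mul_Wps (i j : ℕ) {N : ℕ} (hN : i + q < N) :
    ∑ r ∈ Finset.range N, Kps p q a i r * Wps p q a r j =
      ∑ h ∈ Finset.Icc ((i : ℤ) - p) (i + q), C (transWeight p q a i h) * Wps p q a h j := by
  rw [sum_transWeight_split (i : ℤ) (N := N) (by omega), sum_filter_neg_eq_sum_Icc]
  simp only [Kps, add_mul, Finset.sum_add_distrib]
  congr 1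
  simp only [Finset.sum_mul]
  rw [Finset.sum_comm]
  refine Finset.sum_congr rfl fun l hl => ?_
  rw [Finset.mem_Icc] at hl
  rw [Wps_eq_of_neg_of_nonneg (by omega) (by omega) (N := N) (by omega), Finset.sum_comm]
  simp only [Finset.mul_sum]
  exact Finset.sum_congr rfl fun m _ => Finset.sum_congr rfl fun r _ => by ring

lemma sum_one_sub_X_mul_Kps_mul_Wps (i j : ℕ) {N : ℕ} (hN : i + q < N) :
    ∑ r ∈ Finset.range N, ((if i = r then 1 else 0) - X * Kps p q a i r) * Wps p q a r j =
      if i = j then 1 else 0 := by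
  simp only [sub_mul, Finset.sum_sub_distrib, ite_mul, one_mul, zero_mul, Finset.sum_ite_eq,
    Finset.mem_range, mul_assoc, ← Finset.mul_sum, sum_Kps_mul_Wps i j hN]
  rw [if_pos (by omega), Wps_first_step]
  simp

end LeftInverse

section Laurent

variable {p q : ℕ} {a : ℤ → ℤ → ℂ}

local notation "φ" => HahnSeries.ofPowerSeries ℤ ℂ

lemma gen_eq_ofPowerSeries (c : ℕ → ℂ) : gen c = φ (X * PowerSeries.mk c) := by
  rw [gen, map_mul, HahnSeries.ofPowerSeries_X]

lemma CLS_eq_ofPowerSeries (c : ℂ) : CLS c = φ (C c) := (HahnSeries.ofPowerSeries_C c).symm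

lemma zLS_mul_ofPowerSeries_X : zLS * φ X = 1 := by
  rw [zLS, HahnSeries.ofPowerSeries_X, HahnSeries.single_mul_single]
  simp

lemma Wser_eq_ofPowerSeries (i j : ℤ) : Wser p q a i j = φ (X * Wps p q a i j) := by
  simp only [Wser, gen_eq_ofPowerSeries, Wpoly_eq_pathPoly]
  rfl

lemma Vser_eq_ofPowerSeries (i j : ℤ) : Vser p q a i j = φ (X * Vps p q a i j) :=
  gen_eq_ofPowerSeries _

lemma Kmat_eq_ofPowerSeries (i j : ℕ) : Kmat p q a i j = φ (Kps p q a i j) := by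
  simp only [Kmat, Kps, Hmat_eq_transWeight, CLS_eq_ofPowerSeries, Vser_eq_ofPowerSeries,
    map_add, map_sum, map_mul]
  rw [add_right_inj]
  refine Finset.sum_congr rfl fun l hl => ?_
  rw [Finset.mem_Icc] at hl
  rw [← Finset.sum_subset (Finset.Icc_subset_Icc_right (Nat.sub_le q j)) fun m hmq hm => ?_]
  · refine Finset.sum_congr rfl fun m hm => ?_
    rw [Finset.mem_Icc] at hm
    rw [transWeight_of_lt (by omega) (by omega), transWeight_of_le (by omega) (by omega),
      show -(l : ℤ) - i = -(l + i) by ring, show (j : ℤ) - -m = m + j by ring]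
  · rw [Finset.mem_Icc] at hm hmq
    rw [transWeight_eq_zero (h := -(m : ℤ)) (h' := j) (by simp only [Finset.mem_Icc]; omega),
      map_zero, map_zero, mul_zero, zero_mul]

lemma sum_zLS_sub_Kmat_mul_Wser (i j : ℕ) {N : ℕ} (hN : i + q < N) :
    ∑ r ∈ Finset.range N, ((if i = r then zLS else 0) - Kmat p q a i r) * Wser p q a r j =
      if i = j then 1 else 0 := by
  have hterm : ∀ r : ℕ, ((if i = r then zLS else 0) - Kmat p q a i r) * Wser p q a r j =
      φ (((if i = r then 1 else 0) - X * Kps p q a i r) * Wps p q a r j) := by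
    intro r
    rw [Kmat_eq_ofPowerSeries, Wser_eq_ofPowerSeries]
    split_ifs <;> simp only [map_mul, map_sub, map_one, map_zero]
    · linear_combination φ (Wps p q a r j) * zLS_mul_ofPowerSeries_X
    · ring
  simp only [hterm, ← map_sum, sum_one_sub_X_mul_Kps_mul_Wps i j hN, apply_ite φ, map_one,
    map_zero]

end Laurent

section RightInverse

variable {p q : ℕ} {a : ℤ → ℤ → ℂ}

lemma Wser_revWeights (i j : ℤ) : Wser q p (revWeights a) j i = Wser p q a i j := by
  simp only [Wser, Wpoly_eq_pathPoly, pathPoly_revWeights]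

lemma Vser_revWeights (i j : ℤ) : Vser q p (revWeights a) j i = Vser p q a i j := by
  simp only [Vser, Vpoly_eq_pathPoly, pathPoly_revWeights]

lemma Kmat_revWeights (i j : ℕ) : Kmat q p (revWeights a) j i = Kmat p q a i j := by
  simp only [Kmat, Hmat_eq_transWeight, transWeight_revWeights, Vser_revWeights]
  rw [add_right_inj, Finset.sum_comm]
  refine Finset.sum_congr rfl fun l _ => Finset.sum_congr rfl fun m _ => ?_
  simp only [revWeights, neg_neg]
  ring

lemma sum_Wser_mul_zLS_sub_Kmat (i j : ℕ) {N : ℕ} (hN : j + p < N) :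
    ∑ r ∈ Finset.range N, Wser p q a i r * ((if r = j then zLS else 0) - Kmat p q a r j) =
      if i = j then 1 else 0 := by
  calc _ = ∑ r ∈ Finset.range N, ((if j = r then zLS else 0) - Kmat q p (revWeights a) j r) *
        Wser q p (revWeights a) r i :=
        Finset.sum_congr rfl fun r _ => by
          simp only [Wser_revWeights, Kmat_revWeights, mul_comm, @eq_comm _ j r]
    _ = if j = i then 1 else 0 := sum_zLS_sub_Kmat_mul_Wser j i hN
    _ = if i = j then 1 else 0 := by simp only [@eq_comm _ j i]

end RightInverse

theorem W_series_inverse_of_zI_minus_K_general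
    (p q : ℕ) (a : ℤ → ℤ → ℂ) (i j : ℕ) :
    (∀ N : ℕ, i + q < N →
      ∑ r ∈ Finset.range N,
          ((if i = r then zLS else 0) - Kmat p q a i r) * Wser p q a (r : ℤ) (j : ℤ) =
        if i = j then 1 else 0) ∧
    (∀ N : ℕ, j + p < N →
      ∑ r ∈ Finset.range N,
          Wser p q a (i : ℤ) (r : ℤ) * ((if r = j then zLS else 0) - Kmat p q a r j) =
        if i = j then 1 else 0) :=
  ⟨fun _ hN => sum_zLS_sub_Kmat_mul_Wser i j hN, fun _ hN => sum_Wser_mul_zLS_sub_Kmat i j hN⟩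

/-- **Theorem 5.1**: the matrix `Ψ = (W_{i,j}(z))_{i,j ≥ 0}` is a two-sided inverse of the
banded matrix `zI - K` (all the sums below are complete: they include every index at which
the corresponding entry of `zI - K` can be nonzero).  In particular `W_{i,j}(z) = ζ_{i,j}(z)`,
the `(i,j)` entry of `(zI - K)⁻¹`. -/
theorem W_series_inverse_of_zI_minus_K
    (p q : ℕ) (hp : 1 ≤ p) (hq : 1 ≤ q) (a : ℤ → ℤ → ℂ) (i j : ℕ) :
    (∀ N : ℕ, i + q < N →
      ∑ r ∈ Finset.range N,
          ((if i = r then zLS else 0) - Kmat p q a i r) * Wser p q a (r : ℤ) (j : ℤ) =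
        if i = j then 1 else 0) ∧
    (∀ N : ℕ, j + p < N →
      ∑ r ∈ Finset.range N,
          Wser p q a (i : ℤ) (r : ℤ) * ((if r = j then zLS else 0) - Kmat p q a r j) =
        if i = j then 1 else 0) :=
  W_series_inverse_of_zI_minus_K_general p q a i j
end
end

section
/- For every integer k ≥ 1, all the transformations below are defined (at each stage the (q−1,p−1) entry of the argument of T^{−1} is nonzero) and the matrix continued fraction identity F(z) = (τ_{α,0} ∘ τ_{α,1} ∘ ⋯ ∘ τ_{α,k−1})(F_k(z)) holds, where F(z) is the q×p matrix with entries φ_{i,j}(z) (0 ≤ i ≤ q−1, 0 ≤ j ≤ p−1) and F_k(z) is the q×p matrix with entries φ^{(k)}_{i,j}(z) (0 ≤ i ≤ q−1, 0 ≤ j ≤ p−1). -/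
open scoped BigOperators
open Finset

noncomputable section

/-- The transformation `T` on `q × p` matrices (over a field) with nonzero `(0,0)` entry. -/
def Tmat {F : Type*} [Field F] {q p : ℕ} (hq : 0 < q) (hp : 0 < p)
    (A : Matrix (Fin q) (Fin p) F) : Matrix (Fin q) (Fin p) F := fun i j =>
  if hi : (i : ℕ) + 1 < q then
    if hj : (j : ℕ) + 1 < p then
      (A ⟨(i : ℕ) + 1, hi⟩ ⟨(j : ℕ) + 1, hj⟩ * A ⟨0, hq⟩ ⟨0, hp⟩ -
          A ⟨0, hq⟩ ⟨(j : ℕ) + 1, hj⟩ * A ⟨(i : ℕ) + 1, hi⟩ ⟨0, hp⟩) / A ⟨0, hq⟩ ⟨0, hp⟩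
    else A ⟨(i : ℕ) + 1, hi⟩ ⟨0, hp⟩ / A ⟨0, hq⟩ ⟨0, hp⟩
  else
    if hj : (j : ℕ) + 1 < p then -A ⟨0, hq⟩ ⟨(j : ℕ) + 1, hj⟩ / A ⟨0, hq⟩ ⟨0, hp⟩
    else 1 / A ⟨0, hq⟩ ⟨0, hp⟩

/-- The inverse transformation `T⁻¹` on `q × p` matrices with nonzero `(q-1,p-1)` entry. -/
def Tinv {F : Type*} [Field F] {q p : ℕ} (hq : 0 < q) (hp : 0 < p)
    (B : Matrix (Fin q) (Fin p) F) : Matrix (Fin q) (Fin p) F := fun i j =>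
  if hi : (i : ℕ) = 0 then
    if hj : (j : ℕ) = 0 then
      1 / B ⟨q - 1, Nat.sub_lt hq one_pos⟩ ⟨p - 1, Nat.sub_lt hp one_pos⟩
    else
      -B ⟨q - 1, Nat.sub_lt hq one_pos⟩ ⟨(j : ℕ) - 1, by have := j.isLt; omega⟩ /
        B ⟨q - 1, Nat.sub_lt hq one_pos⟩ ⟨p - 1, Nat.sub_lt hp one_pos⟩
  else
    if hj : (j : ℕ) = 0 then
      B ⟨(i : ℕ) - 1, by have := i.isLt; omega⟩ ⟨p - 1, Nat.sub_lt hp one_pos⟩ /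
        B ⟨q - 1, Nat.sub_lt hq one_pos⟩ ⟨p - 1, Nat.sub_lt hp one_pos⟩
    else
      (B ⟨(i : ℕ) - 1, by have := i.isLt; omega⟩ ⟨(j : ℕ) - 1, by have := j.isLt; omega⟩ *
          B ⟨q - 1, Nat.sub_lt hq one_pos⟩ ⟨p - 1, Nat.sub_lt hp one_pos⟩ -
        B ⟨(i : ℕ) - 1, by have := i.isLt; omega⟩ ⟨p - 1, Nat.sub_lt hp one_pos⟩ *
          B ⟨q - 1, Nat.sub_lt hq one_pos⟩ ⟨(j : ℕ) - 1, by have := j.isLt; omega⟩) /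
        B ⟨q - 1, Nat.sub_lt hq one_pos⟩ ⟨p - 1, Nat.sub_lt hp one_pos⟩

/-- `chainFrom τ k X m = τ_m (τ_{m+1} ( ⋯ (τ_{k-1} X)))`; in particular
`chainFrom τ k X 0 = (τ_0 ∘ τ_1 ∘ ⋯ ∘ τ_{k-1}) X`. -/
def chainFrom {M : Type*} (τ : ℕ → M → M) (k : ℕ) (X : M) (m : ℕ) : M :=
  (List.range (k - m)).foldr (fun t Y => τ (m + t) Y) X

/-- The `q × p` matrix `α_k(z)`, whose only nonzero entry is `z - a_k^{(0)}` at `(q-1, p-1)`. -/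
def alphaZ (q p : ℕ) (a : ℤ → ℤ → ℂ) (k : ℕ) : Matrix (Fin q) (Fin p) LS := fun i j =>
  if (i : ℕ) = q - 1 ∧ (j : ℕ) = p - 1 then zLS - CLS (a 0 (k : ℤ)) else 0

/-- The `q × q` matrix `α_k⁺`: first `q-1` rows of the identity, last row
`(-a_k^{(1)}, …, -a_k^{(q)})`. -/
def alphaP (q : ℕ) (a : ℤ → ℤ → ℂ) (k : ℕ) : Matrix (Fin q) (Fin q) LS := fun i j =>
  if (i : ℕ) = q - 1 then -CLS (a (((j : ℕ) : ℤ) + 1) (k : ℤ))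
  else if i = j then 1 else 0

/-- The `p × p` matrix `α_k⁻`: first `p-1` columns of the identity, last column
`(a_k^{(-1)}, …, a_k^{(-p)})ᵀ`. -/
def alphaM (p : ℕ) (a : ℤ → ℤ → ℂ) (k : ℕ) : Matrix (Fin p) (Fin p) LS := fun i j =>
  if (j : ℕ) = p - 1 then CLS (a (-(((i : ℕ) : ℤ) + 1)) (k : ℤ))
  else if i = j then 1 else 0

/-- `F_r(z)`: the `q × p` matrix of resolvent series of `H^{[r]}` (delete the first `r` rows
and columns of `H`); `F_0 = F`. -/
def Fmat (p q : ℕ) (a : ℤ → ℤ → ℂ) (r : ℕ) : Matrix (Fin q) (Fin p) LS := fun i j =>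
  gen fun n => onePow (fun i' j' => Hmat p q a (i' + r) (j' + r)) q n (i : ℕ) (j : ℕ)

/-- The transformation `τ_{α,k}(X) = T⁻¹(α_k(z) + α_k⁺ X α_k⁻)`. -/
def tauAlpha (p q : ℕ) (hq : 0 < q) (hp : 0 < p) (a : ℤ → ℤ → ℂ) (k : ℕ)
    (X : Matrix (Fin q) (Fin p) LS) : Matrix (Fin q) (Fin p) LS :=
  Tinv hq hp (alphaZ q p a k + alphaP q a k * X * alphaM p a k)


/-!
Write `H^{[r]}` in block form, with corner `h = a_r^{(0)}`, rest of the first row `u` and rest of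
the first column `v`, and let `G = (z - H^{[r]})⁻¹ = Σ_n (H^{[r]})^n z^{-n-1}` and
`G' = (z - H^{[r+1]})⁻¹`. The Schur complement formulas
`G₀₀ (z - h - u G' v) = 1`, `G_{0,j+1} = G₀₀ (u G')_j`, `G_{i+1,0} = (G' v)_i G₀₀` and
`G_{i+1,j+1} = G'_{ij} + (G' v)_i G_{0,j+1}` hold coefficientwise by the first-passage and
last-exit decompositions of the paths counted by `((H^{[r]})^n)_{ij}`. Since `u` and `v` have
only `q` and `p` nonzero entries, on the `q × p` corner they say
`T(F_r) = α_r + α_r⁺ F_{r+1} α_r⁻`, that is `F_r = τ_{α,r}(F_{r+1})`, and the continued fraction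
follows by iterating.
-/

lemma gen_zero : (gen fun _ => 0) = 0 := by
  rw [gen, show (PowerSeries.mk fun _ => (0 : ℂ)) = 0 from PowerSeries.ext fun _ => by simp,
    map_zero, mul_zero]

lemma gen_add (b c : ℕ → ℂ) : gen b + gen c = gen fun n => b n + c n := by
  rw [gen, gen, gen, ← mul_add, ← map_add]
  rfl

lemma gen_sum {ι : Type*} (s : Finset ι) (f : ι → ℕ → ℂ) :
    ∑ i ∈ s, gen (f i) = gen fun n => ∑ i ∈ s, f i n := by
  simp only [gen, ← Finset.mul_sum, ← map_sum]
  congr 2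
  ext n
  simp

lemma CLS_mul_gen (x : ℂ) (c : ℕ → ℂ) : CLS x * gen c = gen fun n => x * c n := by
  rw [CLS, gen, gen, ← HahnSeries.ofPowerSeries_C, mul_left_comm, ← map_mul]
  congr 2
  ext n
  simp

lemma gen_mul_CLS (x : ℂ) (c : ℕ → ℂ) : gen c * CLS x = gen fun n => c n * x := by
  simp only [mul_comm _ (CLS x), mul_comm _ x, CLS_mul_gen]

lemma gen_mul_gen (b c : ℕ → ℂ) :
    gen b * gen c = gen fun n => ∑ m ∈ range n, b m * c (n - 1 - m) := by
  have key : PowerSeries.X * (PowerSeries.mk b * PowerSeries.mk c) =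
      PowerSeries.mk fun n => ∑ m ∈ range n, b m * c (n - 1 - m) := by
    ext (_ | n)
    · simp
    · rw [PowerSeries.coeff_succ_X_mul, PowerSeries.coeff_mul, PowerSeries.coeff_mk,
        Finset.Nat.sum_antidiagonal_eq_sum_range_succ_mk]
      simp
  simp only [gen, ← HahnSeries.ofPowerSeries_X, ← key, map_mul]
  ring

lemma zLS_mul_gen (c : ℕ → ℂ) : zLS * gen c = CLS (c 0) + gen fun n => c (n + 1) := by
  have hc : PowerSeries.mk c =
      PowerSeries.C (c 0) + PowerSeries.X * PowerSeries.mk fun n => c (n + 1) := by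
    ext (_ | n) <;> simp [PowerSeries.coeff_succ_X_mul]
  rw [zLS, gen, gen, CLS, ← mul_assoc, HahnSeries.single_mul_single, hc]
  simp [HahnSeries.ofPowerSeries_C, HahnSeries.ofPowerSeries_X, HahnSeries.C_apply]

section OnePow

variable {M : ℕ → ℕ → ℂ} {B : ℕ}

lemma onePow_zero (i j : ℕ) : onePow M B 0 i j = if i = j then 1 else 0 := rfl

lemma onePow_succ (n i j : ℕ) :
    onePow M B (n + 1) i j = ∑ r ∈ range (i + B + 1), M i r * onePow M B n r j := rfl

lemma onePow_eq_zero_of_lt (hM : ∀ i j, i + B < j → M i j = 0) {n i j : ℕ}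
    (h : i + n * B < j) : onePow M B n i j = 0 := by
  induction n generalizing i with
  | zero => exact if_neg (by omega)
  | succ n ih =>
    refine Finset.sum_eq_zero fun r _ => ?_
    rcases le_or_gt r (i + B) with hr | hr
    · rw [ih (by nlinarith), mul_zero]
    · rw [hM i r hr, zero_mul]

lemma sum_onePow_mul_of_le (hM : ∀ i j, i + B < j → M i j = 0) {n i N : ℕ}
    (hN : i + n * B + 1 ≤ N) (f : ℕ → ℂ) :
    ∑ c ∈ range N, onePow M B n i c * f c =
      ∑ c ∈ range (i + n * B + 1), onePow M B n i c * f c :=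
  (Finset.sum_subset (Finset.range_subset_range.mpr hN) fun c _ hc => by
    rw [onePow_eq_zero_of_lt hM (by simp at hc; omega), zero_mul]).symm

lemma onePow_succ_right (hM : ∀ i j, i + B < j → M i j = 0) (n i j : ℕ) :
    onePow M B (n + 1) i j = ∑ c ∈ range (i + n * B + 1), onePow M B n i c * M c j := by
  induction n generalizing i with
  | zero =>
    simp only [onePow_succ, onePow_zero, mul_ite, mul_one, mul_zero, ite_mul, one_mul,
      zero_mul, Finset.sum_ite_eq, Finset.sum_ite_eq', Finset.mem_range]
    split_ifs with h <;> first | rfl | omega | exact (hM i j (by omega)).symm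
  | succ n ih =>
    have hN : ∀ r ∈ range (i + B + 1), r + n * B + 1 ≤ i + (n + 1) * B + 1 := by
      intro r hr; simp at hr; nlinarith
    rw [onePow_succ, Finset.sum_congr rfl fun r hr => by
      rw [ih, ← sum_onePow_mul_of_le hM (hN r hr), Finset.mul_sum], Finset.sum_comm]
    simp only [onePow_succ, Finset.sum_mul, mul_assoc]

end OnePow

def dropFirst (M : ℕ → ℕ → ℂ) : ℕ → ℕ → ℂ := fun i j => M (i + 1) (j + 1)

section PathDecomposition

variable {M : ℕ → ℕ → ℂ} {B P : ℕ}

/-- First-passage decomposition: a path from `i + 1` either never visits `0`, so lives in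
`dropFirst M`, or first reaches `0` after `m + 1` steps, coming down from some `t + 1 ≤ P`. -/
lemma onePow_first_passage (hL : ∀ i j, j + P < i → M i j = 0) (n i j : ℕ) :
    onePow M B n (i + 1) j = (if j = 0 then 0 else onePow (dropFirst M) B n i (j - 1)) +
      ∑ m ∈ range n, (∑ t ∈ range P, onePow (dropFirst M) B m i t * M (t + 1) 0) *
        onePow M B (n - 1 - m) 0 j := by
  induction n generalizing i with
  | zero => cases j <;> simp [onePow_zero]
  | succ n ih =>
    have hstart :
        ∑ t ∈ range P, onePow (dropFirst M) B 0 i t * M (t + 1) 0 = M (i + 1) 0 := by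
      simp only [onePow_zero, ite_mul, one_mul, zero_mul, Finset.sum_ite_eq, Finset.mem_range]
      split_ifs with h
      · rfl
      · exact (hL _ _ (by omega)).symm
    have hstay : ∑ s ∈ range (i + B + 1), dropFirst M i s *
        (if j = 0 then 0 else onePow (dropFirst M) B n s (j - 1)) =
        if j = 0 then 0 else onePow (dropFirst M) B (n + 1) i (j - 1) := by
      split_ifs <;> simp [onePow_succ]
    have hpass : ∀ m, ∑ s ∈ range (i + B + 1), dropFirst M i s *
        ∑ t ∈ range P, onePow (dropFirst M) B m s t * M (t + 1) 0 =
        ∑ t ∈ range P, onePow (dropFirst M) B (m + 1) i t * M (t + 1) 0 := by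
      intro m
      simp only [onePow_succ, Finset.mul_sum, Finset.sum_mul, mul_assoc]
      exact Finset.sum_comm
    rw [onePow_succ, show i + 1 + B + 1 = i + B + 1 + 1 by omega, Finset.sum_range_succ']
    simp only [← dropFirst.eq_def, ih, mul_add, Finset.sum_add_distrib, hstay, Finset.mul_sum]
    rw [Finset.sum_comm, Finset.sum_range_succ' _ n, hstart, add_assoc]
    congr 2
    refine Finset.sum_congr rfl fun m _ => ?_
    rw [← hpass, Finset.sum_mul, show n + 1 - 1 - (m + 1) = n - 1 - m by omega]
    simp only [mul_assoc]

/-- Last-exit decomposition: a path from `0` to `j + 1` leaves `0` for the last time after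
`n - 1 - m` steps, jumping to some `s + 1 ≤ B`, and then stays in `dropFirst M`. -/
lemma onePow_last_exit (hU : ∀ i j, i + B < j → M i j = 0) (n j : ℕ) :
    onePow M B n 0 (j + 1) = ∑ m ∈ range n, onePow M B (n - 1 - m) 0 0 *
      ∑ s ∈ range B, M 0 (s + 1) * onePow (dropFirst M) B m s j := by
  induction n generalizing j with
  | zero => simp [onePow_zero]
  | succ n ih =>
    have hU' : ∀ i j, i + B < j → dropFirst M i j = 0 := fun i j h => hU _ _ (by omega)
    have hstart : ∑ s ∈ range B, M 0 (s + 1) * onePow (dropFirst M) B 0 s j = M 0 (j + 1) := by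
      simp only [onePow_zero, mul_ite, mul_one, mul_zero, Finset.sum_ite_eq', Finset.mem_range]
      split_ifs with h
      · rfl
      · exact (hU _ _ (by omega)).symm
    have hleave : ∀ m < n, ∑ t ∈ range (n * B), (∑ s ∈ range B,
        M 0 (s + 1) * onePow (dropFirst M) B m s t) * dropFirst M t j =
        ∑ s ∈ range B, M 0 (s + 1) * onePow (dropFirst M) B (m + 1) s j := by
      intro m hm
      simp only [Finset.sum_mul, mul_assoc]
      rw [Finset.sum_comm]
      refine Finset.sum_congr rfl fun s hs => ?_
      have : s + m * B + 1 ≤ n * B := by simp at hs; nlinarith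
      rw [← Finset.mul_sum, sum_onePow_mul_of_le hU' this, onePow_succ_right hU']
    rw [onePow_succ_right hU, zero_add, Finset.sum_range_succ', Finset.sum_range_succ' _ n, hstart]
    simp only [← dropFirst.eq_def, ih, Finset.sum_mul, Nat.add_sub_cancel, Nat.sub_zero]
    rw [Finset.sum_comm]
    congr 1
    refine Finset.sum_congr rfl fun m hm => ?_
    rw [← hleave m (Finset.mem_range.mp hm), Finset.mul_sum,
      show n - (m + 1) = n - 1 - m by omega]
    simp only [mul_assoc]

end PathDecomposition

def resolventSeries (M : ℕ → ℕ → ℂ) (B i j : ℕ) : LS := gen fun n => onePow M B n i j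

section Resolvent

variable {M : ℕ → ℕ → ℂ} {B P : ℕ}

lemma sum_resolventSeries_mul_CLS (S : Finset ℕ) (i : ℕ) (x : ℕ → ℂ) :
    ∑ t ∈ S, resolventSeries M B i t * CLS (x t) =
      gen fun n => ∑ t ∈ S, onePow M B n i t * x t := by
  simp only [resolventSeries, gen_mul_CLS, gen_sum]

lemma sum_CLS_mul_resolventSeries (S : Finset ℕ) (j : ℕ) (x : ℕ → ℂ) :
    ∑ s ∈ S, CLS (x s) * resolventSeries M B s j =
      gen fun n => ∑ s ∈ S, x s * onePow M B n s j := by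
  simp only [resolventSeries, CLS_mul_gen, gen_sum]

lemma resolventSeries_succ_left (hL : ∀ i j, j + P < i → M i j = 0) (i j : ℕ) :
    resolventSeries M B (i + 1) j =
      (if j = 0 then 0 else resolventSeries (dropFirst M) B i (j - 1)) +
        (∑ t ∈ range P, resolventSeries (dropFirst M) B i t * CLS (M (t + 1) 0)) *
          resolventSeries M B 0 j := by
  have hif : (if j = 0 then 0 else resolventSeries (dropFirst M) B i (j - 1)) =
      gen fun n => if j = 0 then 0 else onePow (dropFirst M) B n i (j - 1) := by
    split_ifs
    · exact gen_zero.symm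
    · rfl
  rw [hif, sum_resolventSeries_mul_CLS, resolventSeries, resolventSeries, gen_mul_gen, gen_add]
  simp only [onePow_first_passage hL]

lemma resolventSeries_succ_zero (hL : ∀ i j, j + P < i → M i j = 0) (i : ℕ) :
    resolventSeries M B (i + 1) 0 =
      (∑ t ∈ range P, resolventSeries (dropFirst M) B i t * CLS (M (t + 1) 0)) *
        resolventSeries M B 0 0 := by
  simpa using resolventSeries_succ_left hL i 0

lemma resolventSeries_succ_succ (hL : ∀ i j, j + P < i → M i j = 0) (i j : ℕ) :
    resolventSeries M B (i + 1) (j + 1) = resolventSeries (dropFirst M) B i j +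
      (∑ t ∈ range P, resolventSeries (dropFirst M) B i t * CLS (M (t + 1) 0)) *
        resolventSeries M B 0 (j + 1) := by
  simpa using resolventSeries_succ_left hL i (j + 1)

lemma resolventSeries_zero_succ (hU : ∀ i j, i + B < j → M i j = 0) (j : ℕ) :
    resolventSeries M B 0 (j + 1) = resolventSeries M B 0 0 *
      ∑ s ∈ range B, CLS (M 0 (s + 1)) * resolventSeries (dropFirst M) B s j := by
  rw [mul_comm, sum_CLS_mul_resolventSeries, resolventSeries, resolventSeries, gen_mul_gen]
  simp only [onePow_last_exit hU, mul_comm]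

lemma zLS_mul_resolventSeries_zero_zero :
    zLS * resolventSeries M B 0 0 =
      1 + ∑ c ∈ range (B + 1), CLS (M 0 c) * resolventSeries M B c 0 := by
  rw [resolventSeries, zLS_mul_gen, sum_CLS_mul_resolventSeries]
  simp only [onePow_zero, if_true, CLS, map_one, onePow_succ, zero_add]

/-- The Schur complement formula for the `(0, 0)` entry of the resolvent. -/
lemma resolventSeries_zero_zero_mul_eq_one (hL : ∀ i j, j + P < i → M i j = 0) :
    resolventSeries M B 0 0 * (zLS - CLS (M 0 0) - ∑ s ∈ range B, CLS (M 0 (s + 1)) *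
      ∑ t ∈ range P, resolventSeries (dropFirst M) B s t * CLS (M (t + 1) 0)) = 1 := by
  have h := zLS_mul_resolventSeries_zero_zero (M := M) (B := B)
  simp only [Finset.sum_range_succ', resolventSeries_succ_zero hL, ← mul_assoc,
    ← Finset.sum_mul] at h
  linear_combination h

end Resolvent

section Tinv

variable {F : Type*} [Field F] {q p : ℕ} (hq : 0 < q) (hp : 0 < p)

/-- `Tinv B = A` amounts to `Tmat A = B`, written without dividing by `A 0 0`. -/
lemma Tinv_eq_of {A B : Matrix (Fin q) (Fin p) F}
    (hcorner : B ⟨q - 1, Nat.sub_lt hq one_pos⟩ ⟨p - 1, Nat.sub_lt hp one_pos⟩ *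
      A ⟨0, hq⟩ ⟨0, hp⟩ = 1)
    (hrow : ∀ j (hj : j + 1 < p), A ⟨0, hq⟩ ⟨j + 1, hj⟩ =
      -B ⟨q - 1, Nat.sub_lt hq one_pos⟩ ⟨j, by omega⟩ * A ⟨0, hq⟩ ⟨0, hp⟩)
    (hcol : ∀ i (hi : i + 1 < q), A ⟨i + 1, hi⟩ ⟨0, hp⟩ =
      B ⟨i, by omega⟩ ⟨p - 1, Nat.sub_lt hp one_pos⟩ * A ⟨0, hq⟩ ⟨0, hp⟩)
    (hinner : ∀ i j (hi : i + 1 < q) (hj : j + 1 < p), A ⟨i + 1, hi⟩ ⟨j + 1, hj⟩ =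
      B ⟨i, by omega⟩ ⟨j, by omega⟩ +
        B ⟨i, by omega⟩ ⟨p - 1, Nat.sub_lt hp one_pos⟩ * A ⟨0, hq⟩ ⟨j + 1, hj⟩) :
    Tinv hq hp B = A := by
  have hB : B ⟨q - 1, Nat.sub_lt hq one_pos⟩ ⟨p - 1, Nat.sub_lt hp one_pos⟩ ≠ 0 :=
    left_ne_zero_of_mul_eq_one hcorner
  have hA : A ⟨0, hq⟩ ⟨0, hp⟩ =
      1 / B ⟨q - 1, Nat.sub_lt hq one_pos⟩ ⟨p - 1, Nat.sub_lt hp one_pos⟩ :=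
    eq_one_div_of_mul_eq_one_right hcorner
  ext ⟨_ | i, hi⟩ ⟨_ | j, hj⟩
  · simp [Tinv, hA]
  · simp [Tinv, hrow j hj, hA, div_eq_mul_inv]
  · simp [Tinv, hcol i hi, hA, div_eq_mul_inv]
  · simp only [Tinv, Nat.add_one_ne_zero, ↓reduceDIte, Nat.add_sub_cancel, hinner i j hi hj,
      hrow j hj, hA]
    field_simp
    ring

end Tinv

/-- The matrix `H^{[r]}`. -/
def Hsub (p q : ℕ) (a : ℤ → ℤ → ℂ) (r : ℕ) : ℕ → ℕ → ℂ :=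
  fun i j => Hmat p q a (i + r) (j + r)

section Hsub

variable (p q : ℕ) (a : ℤ → ℤ → ℂ) (r : ℕ)

lemma Fmat_apply (i : Fin q) (j : Fin p) :
    Fmat p q a r i j = resolventSeries (Hsub p q a r) q i j := rfl

lemma dropFirst_Hsub : dropFirst (Hsub p q a r) = Hsub p q a (r + 1) := by
  ext i j
  simp only [dropFirst, Hsub, Nat.add_right_comm _ 1 r, add_assoc]

lemma Hsub_eq_zero_of_add_lt (i j : ℕ) (h : i + q < j) : Hsub p q a r i j = 0 :=
  if_neg (by omega)

lemma Hsub_eq_zero_of_add_lt' (i j : ℕ) (h : j + p < i) : Hsub p q a r i j = 0 :=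
  if_neg (by omega)

lemma Hsub_zero_zero : Hsub p q a r 0 0 = a 0 r := by
  simp [Hsub, Hmat]

lemma Hsub_zero_succ {s : ℕ} (hs : s < q) : Hsub p q a r 0 (s + 1) = a (s + 1) r := by
  simp only [Hsub, Hmat]
  rw [if_pos (by omega)]
  congr 1 <;> omega

lemma Hsub_succ_zero {t : ℕ} (ht : t < p) : Hsub p q a r (t + 1) 0 = a (-(t + 1)) r := by
  simp only [Hsub, Hmat]
  rw [if_pos (by omega)]
  congr 1 <;> omega

end Hsub

section ChainFrom

variable {M : Type*} (τ : ℕ → M → M) (k : ℕ) (X : M)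

lemma chainFrom_self : chainFrom τ k X k = X := by
  simp [chainFrom]

lemma chainFrom_of_lt {m : ℕ} (h : m < k) :
    chainFrom τ k X m = τ m (chainFrom τ k X (m + 1)) := by
  rw [chainFrom, show k - m = k - (m + 1) + 1 by omega, List.range_succ_eq_map, List.foldr_cons,
    List.foldr_map, chainFrom]
  simp only [Nat.add_zero, Nat.succ_eq_add_one, ← add_assoc, Nat.add_right_comm m]

lemma chainFrom_eq_of_forall_lt {f : ℕ → M} (h : ∀ m < k, τ m (f (m + 1)) = f m) {m : ℕ}
    (hm : m ≤ k) : chainFrom τ k (f k) m = f m := by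
  induction hm using Nat.decreasingInduction with
  | self => exact chainFrom_self τ k (f k)
  | of_succ m hm ih => rw [chainFrom_of_lt τ k _ hm, ih, h m hm]

end ChainFrom

def tauAlphaArg (p q : ℕ) (a : ℤ → ℤ → ℂ) (r : ℕ) (X : Matrix (Fin q) (Fin p) LS) :
    Matrix (Fin q) (Fin p) LS :=
  alphaZ q p a r + alphaP q a r * X * alphaM p a r

section Alpha

variable {p q : ℕ} (a : ℤ → ℤ → ℂ) (r : ℕ)

lemma alphaP_mul_apply {κ : Type*} (X : Matrix (Fin q) κ LS) (i : Fin q) (j : κ) :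
    (alphaP q a r * X) i j =
      if (i : ℕ) = q - 1 then -∑ s : Fin q, CLS (a ((s : ℕ) + 1) r) * X s j else X i j := by
  split_ifs with hi
  · simp only [Matrix.mul_apply, alphaP, hi, if_true, ← Finset.sum_neg_distrib]
    exact Finset.sum_congr rfl fun s _ => by ring
  · simp [Matrix.mul_apply, alphaP, hi]

lemma mul_alphaM_apply {ι : Type*} (Y : Matrix ι (Fin p) LS) (i : ι) (j : Fin p) :
    (Y * alphaM p a r) i j =
      if (j : ℕ) = p - 1 then ∑ t : Fin p, Y i t * CLS (a (-((t : ℕ) + 1)) r) else Y i j := by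
  split_ifs with hj <;> simp [Matrix.mul_apply, alphaM, hj, eq_comm]

end Alpha

section TauAlphaArgFmat

variable (p q : ℕ) (hp : 0 < p) (hq : 0 < q) (a : ℤ → ℤ → ℂ) (r : ℕ)

lemma sum_Fmat_mul_CLS (i : Fin q) :
    ∑ t : Fin p, Fmat p q a (r + 1) i t * CLS (a (-((t : ℕ) + 1)) r) =
      ∑ t ∈ range p, resolventSeries (dropFirst (Hsub p q a r)) q i t *
        CLS (Hsub p q a r (t + 1) 0) := by
  rw [dropFirst_Hsub, ← Fin.sum_univ_eq_sum_range
    (fun t => resolventSeries (Hsub p q a (r + 1)) q i t * CLS (Hsub p q a r (t + 1) 0))]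
  exact Finset.sum_congr rfl fun t _ => by rw [Hsub_succ_zero p q a r t.isLt, Fmat_apply]

lemma sum_CLS_mul_Fmat (j : Fin p) :
    ∑ s : Fin q, CLS (a ((s : ℕ) + 1) r) * Fmat p q a (r + 1) s j =
      ∑ s ∈ range q, CLS (Hsub p q a r 0 (s + 1)) *
        resolventSeries (dropFirst (Hsub p q a r)) q s j := by
  rw [dropFirst_Hsub, ← Fin.sum_univ_eq_sum_range
    (fun s => CLS (Hsub p q a r 0 (s + 1)) * resolventSeries (Hsub p q a (r + 1)) q s j)]
  exact Finset.sum_congr rfl fun s _ => by rw [Hsub_zero_succ p q a r s.isLt, Fmat_apply]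

lemma tauAlphaArg_Fmat_apply_of_lt {i j : ℕ} (hi : i + 1 < q) (hj : j + 1 < p) :
    tauAlphaArg p q a r (Fmat p q a (r + 1)) ⟨i, by omega⟩ ⟨j, by omega⟩ =
      resolventSeries (dropFirst (Hsub p q a r)) q i j := by
  simp [tauAlphaArg, mul_alphaM_apply, alphaP_mul_apply, alphaZ, dropFirst_Hsub, Fmat_apply,
    show i ≠ q - 1 by omega, show j ≠ p - 1 by omega]

lemma tauAlphaArg_Fmat_apply_last_col {i : ℕ} (hi : i + 1 < q) :
    tauAlphaArg p q a r (Fmat p q a (r + 1)) ⟨i, by omega⟩ ⟨p - 1, Nat.sub_lt hp one_pos⟩ =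
      ∑ t ∈ range p, resolventSeries (dropFirst (Hsub p q a r)) q i t *
        CLS (Hsub p q a r (t + 1) 0) := by
  simp only [tauAlphaArg, Matrix.add_apply, mul_alphaM_apply, alphaP_mul_apply, alphaZ, if_true,
    show i ≠ q - 1 by omega, false_and, if_false, zero_add]
  exact sum_Fmat_mul_CLS p q a r ⟨i, by omega⟩

lemma tauAlphaArg_Fmat_apply_last_row {j : ℕ} (hj : j + 1 < p) :
    tauAlphaArg p q a r (Fmat p q a (r + 1)) ⟨q - 1, Nat.sub_lt hq one_pos⟩ ⟨j, by omega⟩ =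
      -∑ s ∈ range q, CLS (Hsub p q a r 0 (s + 1)) *
        resolventSeries (dropFirst (Hsub p q a r)) q s j := by
  simp only [tauAlphaArg, Matrix.add_apply, mul_alphaM_apply, alphaP_mul_apply, alphaZ, if_true,
    show j ≠ p - 1 by omega, and_false, if_false, zero_add]
  rw [sum_CLS_mul_Fmat p q a r ⟨j, by omega⟩]

lemma tauAlphaArg_Fmat_apply_corner :
    tauAlphaArg p q a r (Fmat p q a (r + 1))
        ⟨q - 1, Nat.sub_lt hq one_pos⟩ ⟨p - 1, Nat.sub_lt hp one_pos⟩ =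
      zLS - CLS (Hsub p q a r 0 0) - ∑ s ∈ range q, CLS (Hsub p q a r 0 (s + 1)) *
        ∑ t ∈ range p, resolventSeries (dropFirst (Hsub p q a r)) q s t *
          CLS (Hsub p q a r (t + 1) 0) := by
  simp only [tauAlphaArg, Matrix.add_apply, Matrix.mul_assoc, alphaP_mul_apply, mul_alphaM_apply,
    alphaZ, if_true, and_self, Hsub_zero_zero, sum_Fmat_mul_CLS]
  rw [← Fin.sum_univ_eq_sum_range (fun s => CLS (Hsub p q a r 0 (s + 1)) *
      ∑ t ∈ range p, resolventSeries (dropFirst (Hsub p q a r)) q s t *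
        CLS (Hsub p q a r (t + 1) 0))]
  simp only [Hsub_zero_succ p q a r (Fin.isLt _)]
  ring

lemma tauAlphaArg_Fmat_corner_mul :
    tauAlphaArg p q a r (Fmat p q a (r + 1))
        ⟨q - 1, Nat.sub_lt hq one_pos⟩ ⟨p - 1, Nat.sub_lt hp one_pos⟩ *
      Fmat p q a r ⟨0, hq⟩ ⟨0, hp⟩ = 1 := by
  rw [tauAlphaArg_Fmat_apply_corner p q hp hq, Fmat_apply, mul_comm]
  exact resolventSeries_zero_zero_mul_eq_one (Hsub_eq_zero_of_add_lt' p q a r)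

lemma tauAlpha_Fmat_succ : tauAlpha p q hq hp a r (Fmat p q a (r + 1)) = Fmat p q a r := by
  have hL := Hsub_eq_zero_of_add_lt' p q a r
  refine Tinv_eq_of (B := tauAlphaArg p q a r (Fmat p q a (r + 1))) hq hp
    (tauAlphaArg_Fmat_corner_mul p q hp hq a r) (fun j hj => ?_) (fun i hi => ?_)
    (fun i j hi hj => ?_)
  · rw [tauAlphaArg_Fmat_apply_last_row p q hq a r hj]
    simp only [Fmat_apply, resolventSeries_zero_succ (Hsub_eq_zero_of_add_lt p q a r)]
    ring
  · rw [tauAlphaArg_Fmat_apply_last_col p q hp a r hi]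
    simp only [Fmat_apply, resolventSeries_succ_zero hL]
  · rw [tauAlphaArg_Fmat_apply_of_lt p q a r hi hj, tauAlphaArg_Fmat_apply_last_col p q hp a r hi]
    simp only [Fmat_apply, resolventSeries_succ_succ hL]

end TauAlphaArgFmat

theorem matrix_continued_fraction_for_F_general
    (p q : ℕ) (hp : 0 < p) (hq : 0 < q) (a : ℤ → ℤ → ℂ) (k : ℕ) :
    (∀ m < k,
      (alphaZ q p a m +
          alphaP q a m * chainFrom (tauAlpha p q hq hp a) k (Fmat p q a k) (m + 1) *
            alphaM p a m)
          ⟨q - 1, Nat.sub_lt hq one_pos⟩ ⟨p - 1, Nat.sub_lt hp one_pos⟩ ≠ 0) ∧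
    Fmat p q a 0 = chainFrom (tauAlpha p q hq hp a) k (Fmat p q a k) 0 := by
  have hchain : ∀ m ≤ k, chainFrom (tauAlpha p q hq hp a) k (Fmat p q a k) m = Fmat p q a m :=
    fun m => chainFrom_eq_of_forall_lt _ k fun r _ => tauAlpha_Fmat_succ p q hp hq a r
  refine ⟨fun m hm => ?_, (hchain 0 k.zero_le).symm⟩
  rw [hchain (m + 1) hm]
  exact left_ne_zero_of_mul_eq_one (tauAlphaArg_Fmat_corner_mul p q hp hq a m)

/-- **Theorem 6.2** (matrix continued fraction for `F(z)`): for every `k ≥ 1`, all the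
transformations `τ_{α,m}` in the composition are defined (the `(q-1,p-1)` entry of the
argument of `T⁻¹` is nonzero at each stage) and
`F(z) = (τ_{α,0} ∘ τ_{α,1} ∘ ⋯ ∘ τ_{α,k-1})(F_k(z))`. -/
theorem matrix_continued_fraction_for_F
    (p q : ℕ) (hp : 0 < p) (hq : 0 < q) (a : ℤ → ℤ → ℂ) (k : ℕ) (hk : 1 ≤ k) :
    (∀ m < k,
      (alphaZ q p a m +
          alphaP q a m * chainFrom (tauAlpha p q hq hp a) k (Fmat p q a k) (m + 1) *
            alphaM p a m)
          ⟨q - 1, Nat.sub_lt hq one_pos⟩ ⟨p - 1, Nat.sub_lt hp one_pos⟩ ≠ 0) ∧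
    Fmat p q a 0 = chainFrom (tauAlpha p q hq hp a) k (Fmat p q a k) 0 :=
  matrix_continued_fraction_for_F_general p q hp hq a k
end
end
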